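/- Let y ∈ ℝ₊^{2m+1} have strictly positive components and let x ∈ ℝ^{m+1} have strictly positive components. Then the algorithm update x' = T(x) has strictly positive components and lies in the simplex 𝒮 = {x ∈ ℝ₊^{m+1} : Σ_{j=0}^{m} x_j = c}, i.e., Σ_{j=0}^{m} T(x)_j = c = √(Σ_{i=0}^{2m} y_i). -/

import Mathlib

open Finset Filter

/-- Extension of `x : Fin (m+1) → ℝ` to `ℕ`, zero outside `[0, m]`. -/
def ext (m : ℕ) (x : Fin (m + 1) → ℝ) (k : ℕ) : ℝ :=
  if h : k < m + 1 then x ⟨k, h⟩ else 0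

/-- Autoconvolution `(x*x)_i = ∑_{j=0}^{i} x_{i-j} x_j`. -/
def aconv (m : ℕ) (x : Fin (m + 1) → ℝ) : Fin (2 * m + 1) → ℝ :=
  fun i => ∑ j ∈ Finset.range (i.1 + 1), ext m x (i.1 - j) * ext m x j

/-- The index `ℓ + j ∈ {0,…,2m}` for `ℓ, j ∈ {0,…,m}`. -/
def idx (m : ℕ) (ℓ j : Fin (m + 1)) : Fin (2 * m + 1) :=
  ⟨ℓ.1 + j.1, by have h1 := ℓ.isLt; have h2 := j.isLt; omega⟩

/-- One term of the I-divergence, with values in `[0,∞]`, with the conventions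
`0·log(0/b) = 0` and value `∞` if `a > 0 = b`. -/
noncomputable def termDiv (a b : ℝ) : ENNReal :=
  if a = 0 then ENNReal.ofReal b
  else if b = 0 then ⊤
  else ENNReal.ofReal (a * Real.log (a / b) - a + b)

/-- `[0,∞]`-valued I-divergence between vectors. -/
noncomputable def Idiv {n : ℕ} (u v : Fin n → ℝ) : ENNReal :=
  ∑ i, termDiv (u i) (v i)

/-- Real-valued I-divergence between vectors (used when the second argument is
positive wherever the first one is). -/
noncomputable def IdivR {n : ℕ} (u v : Fin n → ℝ) : ℝ :=
  ∑ i, (u i * Real.log (u i / v i) - u i + v i)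

/-- `[0,∞]`-valued I-divergence between `(2m+1) × (m+1)` matrices. -/
noncomputable def IdivM (m : ℕ) (M N : Fin (2 * m + 1) → Fin (m + 1) → ℝ) : ENNReal :=
  ∑ i, ∑ j, termDiv (M i j) (N i j)

/-- Real-valued I-divergence between `(2m+1) × (m+1)` matrices. -/
noncomputable def IdivMR (m : ℕ) (M N : Fin (2 * m + 1) → Fin (m + 1) → ℝ) : ℝ :=
  ∑ i, ∑ j, (M i j * Real.log (M i j / N i j) - M i j + N i j)

/-- The set 𝒴: nonnegative matrices supported on `{(i,j) : j ≤ i ≤ j+m}` with row sums `y`. -/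
def calY (m : ℕ) (y : Fin (2 * m + 1) → ℝ) (Y : Fin (2 * m + 1) → Fin (m + 1) → ℝ) : Prop :=
  (∀ i j, 0 ≤ Y i j) ∧
  (∀ (i : Fin (2 * m + 1)) (j : Fin (m + 1)), ¬(j.1 ≤ i.1 ∧ i.1 ≤ j.1 + m) → Y i j = 0) ∧
  (∀ i, ∑ j, Y i j = y i)

/-- The matrix `W(x)` with `W(x)_{ij} = x_{i-j} x_j` on the support and `0` elsewhere. -/
def Wmat (m : ℕ) (x : Fin (m + 1) → ℝ) (i : Fin (2 * m + 1)) (j : Fin (m + 1)) : ℝ :=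
  if h : j.1 ≤ i.1 ∧ i.1 ≤ j.1 + m then x ⟨i.1 - j.1, by omega⟩ * x j else 0

/-- The matrix `Y*(x)` with `Y*(x)_{ij} = (x_{i-j} x_j/(x*x)_i)·y_i` on the support. -/
noncomputable def Ystar (m : ℕ) (y : Fin (2 * m + 1) → ℝ) (x : Fin (m + 1) → ℝ)
    (i : Fin (2 * m + 1)) (j : Fin (m + 1)) : ℝ :=
  if h : j.1 ≤ i.1 ∧ i.1 ≤ j.1 + m then
    x ⟨i.1 - j.1, by omega⟩ * x j / aconv m x i * y i
  else 0

/-- `Ŷ_j = ∑_{i=0}^{m} Y_{i+j,i} + ∑_{i=j}^{j+m} Y_{ij}`. -/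
def Yhat (m : ℕ) (Y : Fin (2 * m + 1) → Fin (m + 1) → ℝ) (j : Fin (m + 1)) : ℝ :=
  (∑ ℓ : Fin (m + 1), Y (idx m ℓ j) ℓ) + ∑ ℓ : Fin (m + 1), Y (idx m ℓ j) j

/-- The algorithm map `T(x)_j = x_j (1/c) ∑_ℓ x_ℓ y_{ℓ+j}/(x*x)_{ℓ+j}`,
with `c = √(∑ y_i)`. -/
noncomputable def Tmap (m : ℕ) (y : Fin (2 * m + 1) → ℝ) (x : Fin (m + 1) → ℝ)
    (j : Fin (m + 1)) : ℝ :=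
  x j * (1 / Real.sqrt (∑ i, y i)) * ∑ ℓ, x ℓ * y (idx m ℓ j) / aconv m x (idx m ℓ j)

/-- The gradient `∇_j I(x) = 2 ∑_ℓ ( x_ℓ − x_ℓ y_{ℓ+j}/(x*x)_{ℓ+j} )`. -/
noncomputable def gradI (m : ℕ) (y : Fin (2 * m + 1) → ℝ) (x : Fin (m + 1) → ℝ)
    (j : Fin (m + 1)) : ℝ :=
  2 * ∑ ℓ, (x ℓ - x ℓ * y (idx m ℓ j) / aconv m x (idx m ℓ j))

/-
Summing `T(x)_j` over `j` gives `(1/c) ∑_{ℓ,j} x_ℓ x_j y_{ℓ+j} / (x*x)_{ℓ+j}`. Grouping the pairs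
`(ℓ, j)` by `i = ℓ + j`, each group contributes `(x*x)_i · y_i / (x*x)_i = y_i`, so the total is
`(1/c) ∑ y_i = c`. Positivity is immediate once `(x*x)_i > 0`, which holds because every row of
the support of `W(x)` is nonempty.
-/

section Autoconvolution

variable {m : ℕ} (x : Fin (m + 1) → ℝ)

theorem Wmat_eq_ite_ext (i : Fin (2 * m + 1)) (j : Fin (m + 1)) :
    Wmat m x i j = if j.1 ≤ i.1 then ext m x (i.1 - j.1) * ext m x j.1 else 0 := by
  unfold Wmat _root_.ext
  by_cases h : j.1 ≤ i.1 ∧ i.1 ≤ j.1 + m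
  · rw [dif_pos h, if_pos h.1, dif_pos (by omega), dif_pos j.isLt]
  · rw [dif_neg h]
    split_ifs <;> first | rfl | omega | simp

theorem sum_Wmat_eq_aconv (i : Fin (2 * m + 1)) : ∑ j, Wmat m x i j = aconv m x i := by
  set g : ℕ → ℝ := fun k => if k ≤ i.1 then ext m x (i.1 - k) * ext m x k else 0
  have ext_eq_zero {k : ℕ} (hk : m + 1 ≤ k) : _root_.ext m x k = 0 := dif_neg (by omega)
  calc ∑ j, Wmat m x i j = ∑ k ∈ range (m + 1), g k := by
        simp only [Wmat_eq_ite_ext]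
        exact Fin.sum_univ_eq_sum_range g (m + 1)
    _ = ∑ k ∈ range (2 * m + 1), g k := by
        refine sum_subset (range_subset_range.mpr (by omega)) fun k _ hk => ?_
        simp only [mem_range, not_lt] at hk
        simp [g, ext_eq_zero hk]
    _ = ∑ k ∈ range (i.1 + 1), g k := by
        refine (sum_subset (range_subset_range.mpr (by omega)) fun k _ hk => ?_).symm
        simp only [mem_range, not_lt] at hk
        simp [g, show ¬k ≤ i.1 by omega]
    _ = aconv m x i := sum_congr rfl fun k hk => if_pos (Nat.lt_succ_iff.mp (mem_range.mp hk))

theorem sum_ite_idx_eq_Wmat (i : Fin (2 * m + 1)) (j : Fin (m + 1)) :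
    ∑ ℓ, (if idx m ℓ j = i then x ℓ * x j else 0) = Wmat m x i j := by
  unfold Wmat
  split_ifs with h
  · rw [sum_eq_single_of_mem ⟨i.1 - j.1, by omega⟩ (mem_univ _)]
    · rw [if_pos (Fin.ext (by simp only [idx]; omega))]
    · intro ℓ _ hℓ
      exact if_neg fun hi => hℓ (Fin.ext (by simp only [idx, Fin.ext_iff] at hi ⊢; omega))
  · refine sum_eq_zero fun ℓ _ => if_neg fun hi => h ?_
    simp only [idx, Fin.ext_iff] at hi
    omega

theorem sum_sum_mul_idx_eq_sum_aconv_mul (f : Fin (2 * m + 1) → ℝ) :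
    ∑ ℓ, ∑ j, x ℓ * x j * f (idx m ℓ j) = ∑ i, aconv m x i * f i := by
  simp_rw [← sum_Wmat_eq_aconv, ← sum_ite_idx_eq_Wmat, sum_mul, ite_mul, zero_mul]
  rw [sum_comm]
  conv_rhs => rw [sum_comm]; enter [2, j]; rw [sum_comm]
  simp only [sum_ite_eq, mem_univ, if_true]

theorem aconv_pos (hx : ∀ j, 0 < x j) (i : Fin (2 * m + 1)) : 0 < aconv m x i := by
  rw [← sum_Wmat_eq_aconv]
  have hW (j : Fin (m + 1)) : 0 ≤ Wmat m x i j := by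
    unfold Wmat
    split_ifs
    exacts [(mul_pos (hx _) (hx _)).le, le_rfl]
  refine sum_pos' (fun j _ => hW j) ⟨⟨min i.1 m, by omega⟩, mem_univ _, ?_⟩
  rw [Wmat, dif_pos (by dsimp only; omega)]
  exact mul_pos (hx _) (hx _)

end Autoconvolution

section AlgorithmMap

variable {m : ℕ} (y : Fin (2 * m + 1) → ℝ) {x : Fin (m + 1) → ℝ}

theorem sum_Tmap (hx : ∀ i, aconv m x i ≠ 0) : ∑ j, Tmap m y x j = √(∑ i, y i) := by
  calc ∑ j, Tmap m y x j
      = 1 / √(∑ i, y i) * ∑ ℓ, ∑ j, x ℓ * x j * (y (idx m ℓ j) / aconv m x (idx m ℓ j)) := by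
        rw [sum_comm, mul_sum]
        refine sum_congr rfl fun j _ => ?_
        simp only [Tmap, mul_sum]
        exact sum_congr rfl fun ℓ _ => by ring
    _ = 1 / √(∑ i, y i) * ∑ i, y i := by
        rw [sum_sum_mul_idx_eq_sum_aconv_mul x fun i => y i / aconv m x i]
        simp only [mul_div_cancel₀ _ (hx _)]
    _ = √(∑ i, y i) := by rw [one_div_mul_eq_div, Real.div_sqrt]

theorem Tmap_pos (hy : ∀ i, 0 < y i) (hx : ∀ j, 0 < x j) (j : Fin (m + 1)) :
    0 < Tmap m y x j := by
  have hc : 0 < √(∑ i, y i) := Real.sqrt_pos.mpr (sum_pos (fun i _ => hy i) univ_nonempty)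
  have hterm (ℓ : Fin (m + 1)) : 0 < x ℓ * y (idx m ℓ j) / aconv m x (idx m ℓ j) :=
    div_pos (mul_pos (hx ℓ) (hy _)) (aconv_pos x hx _)
  exact mul_pos (mul_pos (hx j) (one_div_pos.mpr hc)) (sum_pos (fun ℓ _ => hterm ℓ) univ_nonempty)

end AlgorithmMap

/-- the algorithm update of a strictly positive point is strictly
positive and lies in the simplex `{x : ∑ x_j = c}`, `c = √(∑ y_i)`. -/
theorem stmt9 (m : ℕ) (y : Fin (2 * m + 1) → ℝ) (hy : ∀ i, 0 < y i)
    (x : Fin (m + 1) → ℝ) (hx : ∀ j, 0 < x j) :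
    (∀ j, 0 < Tmap m y x j) ∧ ∑ j, Tmap m y x j = Real.sqrt (∑ i, y i) :=
  ⟨Tmap_pos y hy hx, sum_Tmap y fun i => (aconv_pos x hx i).ne'⟩
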